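/- (Corollary 1, stable case, infinitesimal form.) Let E = EuclideanSpace ℝ (Fin d), let A : E →L[ℝ] E be a self-adjoint continuous linear operator that is positive definite (⟪x, A x⟫ > 0 for all x ≠ 0), let u ∈ E with u ≠ 0, and set w = A u. Let ξ ∈ E satisfy the orthogonality condition ⟪u, ξ + w⟫ = 0, and set v = ξ + w. Then there exists ε > 0 such that for every real λ with 0 < |λ| < ε and λ · (⟪ξ,w⟫ + ‖w‖²) > 0, the angle between u + λ•v and w is strictly smaller than the angle between u and w: θ(u + λ•v, w) < θ(u, w). -/

import Mathlib

open RealInnerProductSpace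

/-!
Write `a = ‖u‖`, `c = ⟪u, w⟫ > 0` and `s = ⟪v, w⟫`. Since `v ⟂ u`, Pythagoras gives
`‖u + t • v‖² = a² + t² ‖v‖²`, while `⟪u + t • v, w⟫ = c + t s`. The angle to `w` decreases as soon
as the cosine increases, i.e. `c ‖u + t • v‖ < (c + t s) a`; after squaring this reads
`c² t² ‖v‖² < 2 c a² t s + t² s² a²`, which holds when `t s > 0` because the left side is of order
`t²` and the first term on the right of order `t`.
-/

namespace InnerProductGeometry

variable {F : Type*} [NormedAddCommGroup F] [InnerProductSpace ℝ F]

theorem angle_lt_angle_of_inner_div_lt {x y w : F}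
    (h : ⟪y, w⟫ / (‖y‖ * ‖w‖) < ⟪x, w⟫ / (‖x‖ * ‖w‖)) : angle x w < angle y w :=
  Real.arccos_lt_arccos (abs_le.mp (abs_real_inner_div_norm_mul_norm_le_one y w)).1 h
    (abs_le.mp (abs_real_inner_div_norm_mul_norm_le_one x w)).2

theorem norm_add_smul_sq_of_inner_eq_zero {u v : F} (huv : ⟪u, v⟫ = 0) (t : ℝ) :
    ‖u + t • v‖ ^ 2 = ‖u‖ ^ 2 + t ^ 2 * ‖v‖ ^ 2 := by
  have h := norm_add_sq_eq_norm_sq_add_norm_sq_real (x := u) (y := t • v)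
    (by rw [real_inner_smul_right, huv, mul_zero])
  rw [norm_smul, Real.norm_eq_abs] at h
  nlinarith [sq_abs t]

theorem angle_add_smul_lt_angle {u v w : F} {t : ℝ} (huv : ⟪u, v⟫ = 0) (huw : 0 < ⟪u, w⟫)
    (hts : 0 < t * ⟪v, w⟫)
    (hsmall : ⟪u, w⟫ * t ^ 2 * ‖v‖ ^ 2 < 2 * ‖u‖ ^ 2 * (t * ⟪v, w⟫)) :
    angle (u + t • v) w < angle u w := by
  set c := ⟪u, w⟫
  set s := ⟪v, w⟫
  have hu : 0 < ‖u‖ := norm_pos_iff.mpr (by rintro rfl; simp [c] at huw)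
  have hw : 0 < ‖w‖ := norm_pos_iff.mpr (by rintro rfl; simp [c] at huw)
  have hinner : ⟪u + t • v, w⟫ = c + t * s := by rw [inner_add_left, real_inner_smul_left]
  have hnorm := norm_add_smul_sq_of_inner_eq_zero huv t
  have hcos : c * ‖u + t • v‖ < (c + t * s) * ‖u‖ := by
    refine lt_of_pow_lt_pow_left₀ 2 (by positivity) ?_
    rw [mul_pow, hnorm, mul_pow]
    nlinarith [mul_lt_mul_of_pos_left hsmall huw, sq_nonneg (t * s * ‖u‖)]
  have hne : 0 < ‖u + t • v‖ := by
    refine lt_of_pow_lt_pow_left₀ 2 (norm_nonneg _) ?_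
    rw [hnorm, zero_pow two_ne_zero]
    positivity
  apply angle_lt_angle_of_inner_div_lt
  rw [hinner, div_lt_div_iff₀ (by positivity) (by positivity)]
  nlinarith [mul_lt_mul_of_pos_right hcos hw]

theorem exists_pos_angle_add_smul_lt_angle {u v w : F} (huv : ⟪u, v⟫ = 0) (huw : 0 < ⟪u, w⟫) :
    ∃ ε > 0, ∀ t : ℝ, |t| < ε → 0 < t * ⟪v, w⟫ → angle (u + t • v) w < angle u w := by
  rcases eq_or_ne ⟪v, w⟫ 0 with hs | hs
  · exact ⟨1, one_pos, fun t _ hts => by simp [hs] at hts⟩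
  have hu : 0 < ‖u‖ := norm_pos_iff.mpr (by rintro rfl; simp at huw)
  refine ⟨2 * ‖u‖ ^ 2 * |⟪v, w⟫| / (⟪u, w⟫ * ‖v‖ ^ 2 + 1),
    div_pos (by have := abs_pos.mpr hs; positivity) (by positivity), fun t ht hts => ?_⟩
  refine angle_add_smul_lt_angle huv huw hts ?_
  have ht0 : 0 < |t| := abs_pos.mpr (left_ne_zero_of_mul hts.ne')
  have hlin : ⟪u, w⟫ * |t| * ‖v‖ ^ 2 < 2 * ‖u‖ ^ 2 * |⟪v, w⟫| := by
    rw [lt_div_iff₀ (by positivity)] at ht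
    nlinarith
  calc ⟪u, w⟫ * t ^ 2 * ‖v‖ ^ 2 = |t| * (⟪u, w⟫ * |t| * ‖v‖ ^ 2) := by rw [← sq_abs t]; ring
    _ < |t| * (2 * ‖u‖ ^ 2 * |⟪v, w⟫|) := mul_lt_mul_of_pos_left hlin ht0
    _ = 2 * ‖u‖ ^ 2 * (t * ⟪v, w⟫) := by rw [← abs_of_pos hts, abs_mul]; ring

end InnerProductGeometry

theorem aga_pulled_toward_stable_fixed_point_general (d : ℕ)
    (A : EuclideanSpace ℝ (Fin d) →L[ℝ] EuclideanSpace ℝ (Fin d))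
    (hpos : ∀ x : EuclideanSpace ℝ (Fin d), x ≠ 0 → 0 < (⟪x, A x⟫ : ℝ))
    (u : EuclideanSpace ℝ (Fin d)) (hu : u ≠ 0)
    (w : EuclideanSpace ℝ (Fin d)) (hw : w = A u)
    (ξ : EuclideanSpace ℝ (Fin d)) (horth : (⟪u, ξ + w⟫ : ℝ) = 0)
    (v : EuclideanSpace ℝ (Fin d)) (hv : v = ξ + w) :
    ∃ ε > 0, ∀ lam : ℝ, 0 < |lam| → |lam| < ε →
      0 < lam * ((⟪ξ, w⟫ : ℝ) + ‖w‖ ^ 2) →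
      InnerProductGeometry.angle (u + lam • v) w < InnerProductGeometry.angle u w := by
  subst hv
  have huw : 0 < ⟪u, w⟫ := hw ▸ hpos u hu
  have hvw : ⟪ξ, w⟫ + ‖w‖ ^ 2 = ⟪ξ + w, w⟫ := by rw [inner_add_left, real_inner_self_eq_norm_sq]
  obtain ⟨ε, hε, hangle⟩ := InnerProductGeometry.exists_pos_angle_add_smul_lt_angle horth huw
  exact ⟨ε, hε, fun lam _ hlam hsign => hangle lam hlam (hvw ▸ hsign)⟩

theorem aga_pulled_toward_stable_fixed_point (d : ℕ)
    (A : EuclideanSpace ℝ (Fin d) →L[ℝ] EuclideanSpace ℝ (Fin d))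
    (hA : IsSelfAdjoint A)
    (hpos : ∀ x : EuclideanSpace ℝ (Fin d), x ≠ 0 → 0 < (⟪x, A x⟫ : ℝ))
    (u : EuclideanSpace ℝ (Fin d)) (hu : u ≠ 0)
    (w : EuclideanSpace ℝ (Fin d)) (hw : w = A u)
    (ξ : EuclideanSpace ℝ (Fin d)) (horth : (⟪u, ξ + w⟫ : ℝ) = 0)
    (v : EuclideanSpace ℝ (Fin d)) (hv : v = ξ + w) :
    ∃ ε > 0, ∀ lam : ℝ, 0 < |lam| → |lam| < ε →
      0 < lam * ((⟪ξ, w⟫ : ℝ) + ‖w‖ ^ 2) →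
      InnerProductGeometry.angle (u + lam • v) w < InnerProductGeometry.angle u w :=
  aga_pulled_toward_stable_fixed_point_general d A hpos u hu w hw ξ horth v hv
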